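/- For every initial condition x₀ : J → ℝ and every T > 0, the truncated tree model admits a solution on [0,T] with initial condition x₀. -/

import Mathlib

/-
The sum of squares `∑ j, X_j²` is a first integral: in `∑ j, X_j X_j'` every cubic term
`c_k X_{\bar k}² X_k` and `d_{\bar k} X_k² X_{\bar k}` coming from node `k` cancels against the
matching term in the equation of its parent. Hence solutions stay in a fixed ball, so
multiplying the vector field by a bump function equal to `1` on that ball changes nothing along
solutions, while the modified field is globally Lipschitz and bounded, and Picard–Lindelöf gives a
solution on all of `[0, T]`.
-/

/-- The offspring set `O_j = {k ≠ root : parent k = j}` of a node in a finite eddy tree. -/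
def offspring {J : Type*} [Fintype J] [DecidableEq J] (root : J) (parent : J → J)
    (j : J) : Finset J :=
  Finset.univ.filter fun k => k ≠ root ∧ parent k = j

/-- A solution of the truncated tree model on `[0,T]`:
`X_j' = α (c_j X_{\bar j}² − ∑_{k ∈ O_j} c_k X_j X_k)
      − β (d_{\bar j} X_{\bar j} X_j − ∑_{k ∈ O_j} d_j X_k²)`. -/
def IsTreeSolution {J : Type*} [Fintype J] [DecidableEq J] (root : J) (parent : J → J)
    (α β : ℝ) (c d : J → ℝ) (T : ℝ) (X : ℝ → J → ℝ) : Prop :=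
  ∀ j : J, ∀ t ∈ Set.Icc (0 : ℝ) T,
    HasDerivWithinAt (fun u => X u j)
      (α * (c j * (X t (parent j)) ^ 2
          - ∑ k ∈ offspring root parent j, c k * X t j * X t k)
        - β * (d (parent j) * X t (parent j) * X t j
          - ∑ k ∈ offspring root parent j, d j * (X t k) ^ 2))
      (Set.Icc (0 : ℝ) T) t

open Set

theorem exists_forall_mem_Icc_hasDerivWithinAt_of_hasCompactSupport
    {E : Type*} [NormedAddCommGroup E] [NormedSpace ℝ E] [CompleteSpace E]
    {G : E → E} (hG : ContDiff ℝ 1 G) (hG_supp : HasCompactSupport G) (x₀ : E)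
    {T : ℝ} (hT : 0 ≤ T) :
    ∃ f : ℝ → E, f 0 = x₀ ∧ ∀ t ∈ Icc 0 T, HasDerivWithinAt f (G (f t)) (Icc 0 T) t := by
  obtain ⟨K, hK⟩ := hG.lipschitzWith_of_hasCompactSupport hG_supp one_ne_zero
  obtain ⟨L, hL⟩ := hG_supp.exists_bound_of_continuous hG.continuous
  have hPL : IsPicardLindelof (fun _ ↦ G) (tmin := 0) (tmax := T) ⟨0, le_rfl, hT⟩ x₀
      (L.toNNReal * T.toNNReal) 0 L.toNNReal K :=
    .of_time_independent (fun x _ ↦ (hL x).trans (le_max_left L 0)) hK.lipschitzOnWith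
      (by simp [max_eq_left hT, Real.coe_toNNReal _ hT])
  exact hPL.exists_eq_forall_mem_Icc_hasDerivWithinAt₀

section SumSq

variable {J : Type*} [Fintype J]

theorem norm_le_sqrt_sum_sq (x : J → ℝ) : ‖x‖ ≤ √(∑ j, x j ^ 2) :=
  (pi_norm_le_iff_of_nonneg (Real.sqrt_nonneg _)).2 fun j ↦
    Real.abs_le_sqrt (Finset.single_le_sum (fun i _ ↦ sq_nonneg (x i)) (Finset.mem_univ j))

theorem sum_sq_eq_of_sum_mul_deriv_eq_zero {f v : ℝ → J → ℝ} {a b : ℝ}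
    (hf : ∀ t ∈ Icc a b, HasDerivWithinAt f (v t) (Icc a b) t)
    (horth : ∀ t ∈ Icc a b, ∑ j, f t j * v t j = 0) :
    ∀ t ∈ Icc a b, ∑ j, f t j ^ 2 = ∑ j, f a j ^ 2 := by
  have hderiv : ∀ t ∈ Icc a b,
      HasDerivWithinAt (fun s ↦ ∑ j, f s j ^ 2) 0 (Icc a b) t := by
    intro t ht
    refine (HasDerivWithinAt.fun_sum fun j _ ↦
      ((hasDerivWithinAt_pi.1 (hf t ht)) j).fun_pow 2).congr_deriv ?_
    norm_num [mul_assoc, ← Finset.mul_sum, horth t ht]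
  refine constant_of_has_deriv_right_zero (fun t ht ↦ (hderiv t ht).continuousWithinAt)
    fun t ht ↦ ?_
  exact (hderiv t (Ico_subset_Icc_self ht)).mono_of_mem_nhdsWithin (Icc_mem_nhdsGE_of_mem ht)

theorem exists_forall_mem_Icc_hasDerivWithinAt_of_sum_mul_eq_zero
    {F : (J → ℝ) → J → ℝ} (hF : ContDiff ℝ 1 F) (horth : ∀ x, ∑ j, x j * F x j = 0)
    (x₀ : J → ℝ) {T : ℝ} (hT : 0 ≤ T) :
    ∃ f : ℝ → J → ℝ, f 0 = x₀ ∧ ∀ t ∈ Icc 0 T, HasDerivWithinAt f (F (f t)) (Icc 0 T) t := by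
  set R := √(∑ j, x₀ j ^ 2)
  let ρ : ContDiffBump (0 : J → ℝ) := ⟨R + 1, R + 2, by positivity, by linarith⟩
  obtain ⟨f, hf0, hf⟩ := exists_forall_mem_Icc_hasDerivWithinAt_of_hasCompactSupport
    (ρ.contDiff.smul hF) ρ.hasCompactSupport.smul_right x₀ hT
  have hf_orth : ∀ t ∈ Icc 0 T, ∑ j, f t j * (ρ (f t) • F (f t)) j = 0 := fun t _ ↦ by
    simp only [Pi.smul_apply, smul_eq_mul, mul_left_comm _ (ρ _), ← Finset.mul_sum, horth,
      mul_zero]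
  have hρ : ∀ t ∈ Icc 0 T, ρ (f t) = 1 := fun t ht ↦ by
    apply ρ.one_of_mem_closedBall
    rw [mem_closedBall_zero_iff]
    calc ‖f t‖ ≤ √(∑ j, f t j ^ 2) := norm_le_sqrt_sum_sq _
      _ = R := by rw [sum_sq_eq_of_sum_mul_deriv_eq_zero hf hf_orth t ht, hf0]
      _ ≤ R + 1 := by linarith
  exact ⟨f, hf0, fun t ht ↦ by simpa [hρ t ht] using hf t ht⟩

end SumSq

section TreeModel

variable {J : Type*} [Fintype J] [DecidableEq J] (root : J) (parent : J → J)

theorem sum_sum_offspring {g : J → J → ℝ} (hg : g (parent root) root = 0) :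
    ∑ j, ∑ k ∈ offspring root parent j, g j k = ∑ k, g (parent k) k := by
  simp only [offspring, Finset.sum_filter]
  rw [Finset.sum_comm]
  refine Finset.sum_congr rfl fun k _ ↦ ?_
  by_cases hk : k = root
  · simp [hk, hg]
  · simp [hk, eq_comm]

variable (α β : ℝ) (c d : J → ℝ)

def treeField (x : J → ℝ) : J → ℝ := fun j ↦
  α * (c j * x (parent j) ^ 2 - ∑ k ∈ offspring root parent j, c k * x j * x k)
    - β * (d (parent j) * x (parent j) * x j - ∑ k ∈ offspring root parent j, d j * x k ^ 2)

theorem contDiff_treeField : ContDiff ℝ 1 (treeField root parent α β c d) :=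
  contDiff_pi.2 fun _ ↦ by unfold treeField; fun_prop

theorem sum_mul_treeField_eq_zero (hparent_root : parent root = root) (hc_root : c root = 0)
    (hd_root : d root = 0) (x : J → ℝ) :
    ∑ j, x j * treeField root parent α β c d x j = 0 := by
  have hterm : ∀ j, x j * treeField root parent α β c d x j
      = α * (c j * x (parent j) ^ 2 * x j - ∑ k ∈ offspring root parent j, c k * x j ^ 2 * x k)
        - β * (d (parent j) * x (parent j) * x j ^ 2
          - ∑ k ∈ offspring root parent j, d j * x j * x k ^ 2) := fun j ↦ by
    have hc : x j * ∑ k ∈ offspring root parent j, c k * x j * x k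
        = ∑ k ∈ offspring root parent j, c k * x j ^ 2 * x k := by
      rw [Finset.mul_sum]; exact Finset.sum_congr rfl fun k _ ↦ by ring
    have hd : x j * ∑ k ∈ offspring root parent j, d j * x k ^ 2
        = ∑ k ∈ offspring root parent j, d j * x j * x k ^ 2 := by
      rw [Finset.mul_sum]; exact Finset.sum_congr rfl fun k _ ↦ by ring
    simp only [treeField]
    linear_combination (-α) * hc + β * hd
  have hc := sum_sum_offspring root parent (g := fun j k ↦ c k * x j ^ 2 * x k) (by simp [hc_root])
  have hd := sum_sum_offspring root parent (g := fun j k ↦ d j * x j * x k ^ 2)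
    (by simp [hparent_root, hd_root])
  rw [Finset.sum_congr rfl fun j _ ↦ hterm j, Finset.sum_sub_distrib, ← Finset.mul_sum,
    ← Finset.mul_sum, Finset.sum_sub_distrib, Finset.sum_sub_distrib, hc, hd]
  ring

end TreeModel

theorem tree_solution_exists_general {J : Type*} [Fintype J] [DecidableEq J]
    (root : J) (parent : J → J)
    (hparent_root : parent root = root)
    (α β : ℝ) (c d : J → ℝ)
    (hc_root : c root = 0) (hd_root : d root = 0)
    (T : ℝ) (hT : 0 < T) (x₀ : J → ℝ) :
    ∃ X : ℝ → J → ℝ,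
      IsTreeSolution root parent α β c d T X ∧ X 0 = x₀ := by
  obtain ⟨X, hX₀, hX⟩ := exists_forall_mem_Icc_hasDerivWithinAt_of_sum_mul_eq_zero
    (contDiff_treeField root parent α β c d)
    (sum_mul_treeField_eq_zero root parent α β c d hparent_root hc_root hd_root) x₀ hT.le
  exact ⟨X, fun j t ht ↦ hasDerivWithinAt_pi.1 (hX t ht) j, hX₀⟩

/-- for every initial condition `x₀ : J → ℝ` and every `T > 0`, the
truncated tree model admits a solution on `[0,T]` with initial condition `x₀`. -/
theorem tree_solution_exists {J : Type*} [Fintype J] [DecidableEq J]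
    (root : J) (parent : J → J) (gen : J → ℕ)
    (hparent_root : parent root = root) (hgen_root : gen root = 0)
    (hgen : ∀ j, j ≠ root → gen j = gen (parent j) + 1)
    (α β : ℝ) (c d : J → ℝ)
    (hc_root : c root = 0) (hd_root : d root = 0)
    (hconserv : ∀ j, j ≠ root → α * c j - β * d j = 0)
    (T : ℝ) (hT : 0 < T) (x₀ : J → ℝ) :
    ∃ X : ℝ → J → ℝ,
      IsTreeSolution root parent α β c d T X ∧ X 0 = x₀ :=
  tree_solution_exists_general root parent hparent_root α β c d hc_root hd_root T hT x₀
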